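/- Let G be a finite split graph with split partition (C, I). If deg_G(x) ≥ |C| + 1 for every vertex x ∈ C and deg_G(y) ≤ |C| − 2 for every vertex y ∈ I, then gp(G\bar{G}) = n(G). -/

import Mathlib

open SimpleGraph

variable {V : Type*}

/-- `v` lies on a geodesic (shortest path) between `u` and `w` in `G`. -/
def liesOnGeodesic (G : SimpleGraph V) (u v w : V) : Prop :=
  G.Reachable u w ∧ G.dist u v + G.dist v w = G.dist u w

/-- `S` is a general position set in `G`: no element of `S` lies on a geodesic
between two other elements of `S`. -/
def isGenPosSet (G : SimpleGraph V) (S : Set V) : Prop :=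
  ∀ u ∈ S, ∀ v ∈ S, ∀ w ∈ S, u ≠ v → v ≠ w → u ≠ w → ¬ liesOnGeodesic G u v w

/-- The general position number `gp(G)` of `G`. -/
noncomputable def gpNum (G : SimpleGraph V) : ℕ :=
  sSup {n : ℕ | ∃ S : Set V, isGenPosSet G S ∧ S.ncard = n}

/-- `S` is a `3`-general position set in `G`: no three vertices of `S` lie on a
common geodesic of length at most `3`. -/
def isGP3Set (G : SimpleGraph V) (S : Set V) : Prop :=
  ∀ u ∈ S, ∀ v ∈ S, ∀ w ∈ S, u ≠ v → v ≠ w → u ≠ w →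
    ¬ (liesOnGeodesic G u v w ∧ G.dist u w ≤ 3)

/-- The `3`-general position number `gp₃(G)` of `G`. -/
noncomputable def gp3Num (G : SimpleGraph V) : ℕ :=
  sSup {n : ℕ | ∃ S : Set V, isGP3Set G S ∧ S.ncard = n}

/-- The complementary prism `G\bar{G}`: the disjoint union of `G` (left copy) and
its complement `Gᶜ` (right copy), together with the perfect matching joining each
vertex to its copy. -/
def compPrism (G : SimpleGraph V) : SimpleGraph (V ⊕ V) where
  Adj x y :=
    match x, y with
    | Sum.inl a, Sum.inl b => G.Adj a b
    | Sum.inr a, Sum.inr b => Gᶜ.Adj a b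
    | Sum.inl a, Sum.inr b => a = b
    | Sum.inr a, Sum.inl b => a = b
  symm := by
    constructor
    rintro (a | a) (b | b) h
    · exact (G.adj_comm a b).mp h
    · exact Eq.symm h
    · exact Eq.symm h
    · exact (Gᶜ.adj_comm a b).mp h
  loopless := by
    constructor
    rintro (a | a) h
    · exact G.loopless.irrefl a h
    · exact Gᶜ.loopless.irrefl a h

/-- The eccentricity of a vertex: the maximum distance to another vertex. -/
noncomputable def ecc (G : SimpleGraph V) (v : V) : ℕ :=
  sSup (Set.range (G.dist v))

/-- The radius of a graph: the minimum eccentricity. -/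
noncomputable def rad (G : SimpleGraph V) : ℕ :=
  sInf (Set.range (ecc G))

/-- The diameter of a graph: the maximum distance between two vertices. -/
noncomputable def graphDiam (G : SimpleGraph V) : ℕ :=
  sSup {n : ℕ | ∃ u v : V, G.dist u v = n}

/-- `\bar{gp}₃(G)`: the maximum, over all `gp₃`-sets `S` of `G`, of the `3`-general
position number of the subgraph of `Gᶜ` induced by the vertices outside `S`. -/
noncomputable def barGp3 (G : SimpleGraph V) : ℕ :=
  sSup {n : ℕ | ∃ S : Set V, isGP3Set G S ∧ S.ncard = gp3Num G ∧
          gp3Num ((Gᶜ).induce Sᶜ) = n}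

/-- A cut vertex: its removal disconnects the graph. -/
def isCutVertex (G : SimpleGraph V) (v : V) : Prop :=
  ¬ (G.induce {u : V | u ≠ v}).Connected

/-- `B` is the vertex set of a `2`-connected subgraph of `G`:
it has at least `3` vertices and removing any one vertex leaves it connected. -/
def isTwoConnectedSet (G : SimpleGraph V) (B : Set V) : Prop :=
  3 ≤ B.ncard ∧ ∀ v ∈ B, (G.induce (B \ {v})).Connected

/-- A block graph: every maximal `2`-connected subgraph is a clique. -/
def isBlockGraph (G : SimpleGraph V) : Prop :=
  ∀ B : Set V, isTwoConnectedSet G B →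
    (∀ B' : Set V, isTwoConnectedSet G B' → B ⊆ B' → B = B') →
    G.IsClique B

/-- Complete multipartite graph: the vertices can be partitioned (via an
equivalence relation, whose classes are the parts) so that two vertices are
adjacent iff they lie in different parts. -/
def isCompleteMultipartite (G : SimpleGraph V) : Prop :=
  ∃ r : V → V → Prop, Equivalence r ∧ ∀ u v, G.Adj u v ↔ ¬ r u v

/-- The hypercube `Q_n`: binary strings of length `n`, two strings being
adjacent when they differ in exactly one coordinate. -/
def hypercube (n : ℕ) : SimpleGraph (Fin n → Bool) where
  Adj x y := {i : Fin n | x i ≠ y i}.ncard = 1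
  symm := by
    constructor
    intro x y h
    simpa [ne_comm] using h
  loopless := by
    constructor
    intro x
    simp

/-- The block graph `G_k`: a chain of `k+1` triangles `{vᵢ, uᵢ, vᵢ₊₁}`,
with the `v`-vertices `v₁, …, v_{k+2}` indexed by `Fin (k+2)` (left summand)
and the `u`-vertices `u₁, …, u_{k+1}` indexed by `Fin (k+1)` (right summand);
the edges are `vᵢvᵢ₊₁`, `uᵢvᵢ` and `uᵢvᵢ₊₁`. -/
def Gk (k : ℕ) : SimpleGraph (Fin (k + 2) ⊕ Fin (k + 1)) where
  Adj x y :=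
    match x, y with
    | Sum.inl a, Sum.inl b => a.val + 1 = b.val ∨ b.val + 1 = a.val
    | Sum.inl a, Sum.inr b => a.val = b.val ∨ a.val = b.val + 1
    | Sum.inr a, Sum.inl b => b.val = a.val ∨ b.val = a.val + 1
    | Sum.inr _, Sum.inr _ => False
  symm := by
    constructor
    rintro (a | a) (b | b) h
    · exact Or.symm h
    · exact h
    · exact h
    · exact h
  loopless := by
    constructor
    rintro (a | a) h
    · omega
    · exact h

/-
A general position set contains no induced path `a - b - c`, and since `G\bar{G}` has diameter
at most `2` this characterises them. The clique `C` in `G` together with the clique `I` in `Gᶜ`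
is such a set with `n(G)` vertices. Conversely, if both copies of `v` lie in `S`, then `S` holds
the `Gᶜ`-copies only of neighbours of `v` and the `G`-copies only of non-neighbours (else
`w - v - \bar{v}` or `\bar{w} - \bar{v} - v` is an induced path); so at most one vertex has both
copies in `S`, and `|S| > n(G)` forces such a `v` with one copy of every other vertex in `S`.
The degree bounds then produce an induced path inside `S`: for `v ∈ C`, a neighbour `y ∈ I` of
`v` and two non-neighbours `x, x' ∈ C` of `y` give `\bar{x} - \bar{y} - \bar{x'}`; for `v ∈ I`,
a non-neighbour `x ∈ C` of `v` and two neighbours `y, y' ∈ I` of `x` give `y - x - y'`.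
-/

open Sum

section GeneralPosition

variable {W : Type*} {H : SimpleGraph W} {S : Set W} {a b c : W}

lemma SimpleGraph.dist_eq_two_of_adj_of_adj (hab : H.Adj a b) (hbc : H.Adj b c) (hac : a ≠ c)
    (hn : ¬ H.Adj a c) : H.dist a c = 2 := by
  rw [dist, edist_eq_two_iff.mpr ⟨hac, hn, b, hab, hbc.symm⟩]
  rfl

lemma liesOnGeodesic_of_adj_of_adj (hab : H.Adj a b) (hbc : H.Adj b c) (hac : a ≠ c)
    (hn : ¬ H.Adj a c) : liesOnGeodesic H a b c := by
  refine ⟨hab.reachable.trans hbc.reachable, ?_⟩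
  rw [dist_eq_one_iff_adj.mpr hab, dist_eq_one_iff_adj.mpr hbc,
    dist_eq_two_of_adj_of_adj hab hbc hac hn]

lemma isGenPosSet.adj_of_adj_of_adj (hS : isGenPosSet H S) (ha : a ∈ S) (hb : b ∈ S)
    (hc : c ∈ S) (hab : H.Adj a b) (hbc : H.Adj b c) (hac : a ≠ c) : H.Adj a c := by
  by_contra hn
  exact hS a ha b hb c hc hab.ne hbc.ne hac (liesOnGeodesic_of_adj_of_adj hab hbc hac hn)

lemma isGenPosSet_of_dist_eq_ite (p : W → Bool)
    (hd : ∀ a ∈ S, ∀ b ∈ S, a ≠ b → H.dist a b = if p a = p b then 1 else 2) :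
    isGenPosSet H S := by
  rintro u hu v hv w hw huv hvw huw ⟨-, h⟩
  rw [hd u hu v hv huv, hd v hv w hw hvw, hd u hu w hw huw] at h
  split_ifs at h <;> simp_all

end GeneralPosition

lemma Set.ncard_eq_ncard_preimage_inl_add_ncard_preimage_inr {α β : Type*} [Finite α]
    [Finite β] (S : Set (α ⊕ β)) : S.ncard = (inl ⁻¹' S).ncard + (inr ⁻¹' S).ncard := by
  nth_rw 1 [← image_preimage_inl_union_image_preimage_inr S]
  rw [ncard_union_eq disjoint_image_inl_image_inr, ncard_image_of_injective _ inl_injective,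
    ncard_image_of_injective _ inr_injective]

section CompPrism

variable {G : SimpleGraph V} {S : Set (V ⊕ V)} {u v : V}

@[simp] lemma compPrism_adj_inl_inl : (compPrism G).Adj (inl u) (inl v) ↔ G.Adj u v := Iff.rfl

@[simp] lemma compPrism_adj_inr_inr : (compPrism G).Adj (inr u) (inr v) ↔ Gᶜ.Adj u v := Iff.rfl

@[simp] lemma compPrism_adj_inl_inr : (compPrism G).Adj (inl u) (inr v) ↔ u = v := Iff.rfl

@[simp] lemma compPrism_adj_inr_inl : (compPrism G).Adj (inr u) (inl v) ↔ u = v := Iff.rfl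

lemma compPrism_dist_inl_inr (h : u ≠ v) : (compPrism G).dist (inl u) (inr v) = 2 := by
  by_cases huv : G.Adj u v
  · exact dist_eq_two_of_adj_of_adj (b := inl v) (by simpa) (by simp) (by simp) (by simpa)
  · exact dist_eq_two_of_adj_of_adj (b := inr u) (by simp) (by simpa [h]) (by simp) (by simpa)

lemma compPrism_dist_inr_inl (h : u ≠ v) : (compPrism G).dist (inr u) (inl v) = 2 := by
  rw [dist_comm, compPrism_dist_inl_inr h.symm]

lemma isGenPosSet_compPrism_image_inl_union_image_inr {C I : Set V} (hdisj : Disjoint C I)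
    (hC : G.IsClique C) (hI : Gᶜ.IsClique I) :
    isGenPosSet (compPrism G) (inl '' C ∪ inr '' I) := by
  refine isGenPosSet_of_dist_eq_ite isLeft ?_
  rintro _ (⟨x, hx, rfl⟩ | ⟨x, hx, rfl⟩) _ (⟨y, hy, rfl⟩ | ⟨y, hy, rfl⟩) hne
  · simpa [dist_eq_one_iff_adj] using hC hx hy (by simpa using hne)
  · simpa using compPrism_dist_inl_inr (hdisj.ne_of_mem hx hy)
  · simpa using compPrism_dist_inr_inl (hdisj.ne_of_mem hy hx).symm
  · simpa [dist_eq_one_iff_adj] using hI hx hy (by simpa using hne)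

lemma isGenPosSet.not_adj_of_inl_mem (hS : isGenPosSet (compPrism G) S) (hv : inl v ∈ S)
    (hv' : inr v ∈ S) (hu : inl u ∈ S) (huv : u ≠ v) : ¬ G.Adj u v := fun h ↦
  huv (by simpa using hS.adj_of_adj_of_adj hu hv hv' (by simpa) (by simp) (by simp))

lemma isGenPosSet.adj_of_inr_mem (hS : isGenPosSet (compPrism G) S) (hv : inl v ∈ S)
    (hv' : inr v ∈ S) (hu : inr u ∈ S) (huv : u ≠ v) : G.Adj u v := by
  by_contra h
  exact huv (by simpa using hS.adj_of_adj_of_adj hu hv' hv (by simp [huv, h]) (by simp) (by simp))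

lemma isGenPosSet.exists_of_card_lt_ncard [Finite V] (hS : isGenPosSet (compPrism G) S)
    (hcard : Nat.card V < S.ncard) :
    ∃ v, ∀ w ≠ v, (G.Adj v w → inr w ∈ S) ∧ (¬ G.Adj v w → inl w ∈ S) := by
  rw [Set.ncard_eq_ncard_preimage_inl_add_ncard_preimage_inr] at hcard
  set A := inl ⁻¹' S
  set B := inr ⁻¹' S
  have hAB : (A ∩ B).Subsingleton := fun v ⟨hvA, hvB⟩ w ⟨hwA, hwB⟩ ↦ by
    by_contra hne
    exact hS.not_adj_of_inl_mem hvA hvB hwA (Ne.symm hne)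
      (hS.adj_of_inr_mem hvA hvB hwB (Ne.symm hne))
  have hsum := Set.ncard_union_add_ncard_inter A B
  have hunion := Set.ncard_le_card (A ∪ B)
  have hinter := Set.ncard_le_one_iff_subsingleton.mpr hAB
  obtain ⟨v, hvA, hvB⟩ : (A ∩ B).Nonempty := (Set.ncard_pos).mp (by omega)
  have hcover : A ∪ B = Set.univ :=
    Set.eq_of_subset_of_ncard_le (Set.subset_univ _) (by rw [Set.ncard_univ]; omega)
  refine ⟨v, fun w hwv ↦ ⟨fun hadj ↦ ?_, fun hadj ↦ ?_⟩⟩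
  · exact (hcover ▸ Set.mem_univ w : w ∈ A ∪ B).resolve_left
      fun hwA ↦ hS.not_adj_of_inl_mem hvA hvB hwA hwv hadj.symm
  · exact (hcover ▸ Set.mem_univ w : w ∈ A ∪ B).resolve_right
      fun hwB ↦ hadj (hS.adj_of_inr_mem hvA hvB hwB hwv).symm

end CompPrism

section Split

variable [Finite V] {G : SimpleGraph V} {C : Set V} {x y : V}

lemma exists_two_adj_not_mem (hx : x ∈ C) (hdeg : C.ncard + 1 ≤ (G.neighborSet x).ncard) :
    ∃ y y', y ≠ y' ∧ y ∉ C ∧ y' ∉ C ∧ G.Adj x y ∧ G.Adj x y' := by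
  have hsub : G.neighborSet x ⊆ (G.neighborSet x \ C) ∪ (C \ {x}) := fun y hy ↦ by
    by_cases hyC : y ∈ C
    · exact .inr ⟨hyC, (G.ne_of_adj hy).symm⟩
    · exact .inl ⟨hy, hyC⟩
  have hle := (Set.ncard_le_ncard hsub).trans (Set.ncard_union_le _ _)
  have hpos : 0 < C.ncard := (Set.ncard_pos).mpr ⟨x, hx⟩
  rw [Set.ncard_sdiff_singleton_of_mem hx] at hle
  obtain ⟨y, y', ⟨hy, hyC⟩, ⟨hy', hy'C⟩, hne⟩ :=
    (Set.one_lt_ncard_iff).mp (by omega : 1 < (G.neighborSet x \ C).ncard)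
  exact ⟨y, y', hne, hyC, hy'C, hy, hy'⟩

lemma exists_two_not_adj (hN : G.neighborSet y ⊆ C)
    (hdeg : (G.neighborSet y).ncard + 2 ≤ C.ncard) :
    ∃ x x', x ≠ x' ∧ x ∈ C ∧ x' ∈ C ∧ ¬ G.Adj y x ∧ ¬ G.Adj y x' := by
  have hdiff := Set.ncard_sdiff hN
  obtain ⟨x, x', ⟨hx, hxN⟩, ⟨hx', hx'N⟩, hne⟩ :=
    (Set.one_lt_ncard_iff).mp (by omega : 1 < (C \ G.neighborSet y).ncard)
  exact ⟨x, x', hne, hx, hx', hxN, hx'N⟩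

lemma ncard_le_of_isGenPosSet_compPrism {S : Set (V ⊕ V)} (hC : G.IsClique C)
    (hindep : ∀ u ∉ C, ∀ w ∉ C, ¬ G.Adj u w)
    (hdegC : ∀ x ∈ C, C.ncard + 1 ≤ (G.neighborSet x).ncard)
    (hdegI : ∀ y ∉ C, (G.neighborSet y).ncard + 2 ≤ C.ncard)
    (hS : isGenPosSet (compPrism G) S) : S.ncard ≤ Nat.card V := by
  have hN : ∀ y ∉ C, G.neighborSet y ⊆ C := fun y hy w hw ↦
    by_contra fun hwC ↦ hindep y hy w hwC hw
  by_contra! hlt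
  obtain ⟨v, hv⟩ := hS.exists_of_card_lt_ncard hlt
  by_cases hvC : v ∈ C
  · obtain ⟨y, -, -, hyC, -, hvy, -⟩ := exists_two_adj_not_mem hvC (hdegC v hvC)
    obtain ⟨x, x', hxx', hx, hx', hyx, hyx'⟩ := exists_two_not_adj (hN y hyC) (hdegI y hyC)
    have hinr : ∀ z ∈ C, ¬ G.Adj y z → inr z ∈ S := fun z hz hyz ↦
      have hzv : z ≠ v := by rintro rfl; exact hyz hvy.symm
      (hv z hzv).1 (hC hvC hz hzv.symm)
    have := hS.adj_of_adj_of_adj (hinr x hx hyx) ((hv y hvy.ne.symm).1 hvy) (hinr x' hx' hyx')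
      ((G.compl_adj x y).mpr ⟨ne_of_mem_of_not_mem hx hyC, fun h ↦ hyx h.symm⟩)
      ((G.compl_adj y x').mpr ⟨(ne_of_mem_of_not_mem hx' hyC).symm, hyx'⟩) (by simpa)
    simp [hC hx hx' hxx'] at this
  · obtain ⟨x, -, -, hx, -, hvx, -⟩ := exists_two_not_adj (hN v hvC) (hdegI v hvC)
    obtain ⟨y, y', hyy', hyC, hy'C, hxy, hxy'⟩ := exists_two_adj_not_mem hx (hdegC x hx)
    have hinl : ∀ z ∉ C, G.Adj x z → inl z ∈ S := fun z hz hxz ↦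
      have hzv : z ≠ v := by rintro rfl; exact hvx hxz.symm
      (hv z hzv).2 (hindep v hvC z hz)
    have := hS.adj_of_adj_of_adj (hinl y hyC hxy) ((hv x (ne_of_mem_of_not_mem hx hvC)).2 hvx)
      (hinl y' hy'C hxy') (by simpa using hxy.symm) (by simpa) (by simpa)
    exact hindep y hyC y' hy'C (by simpa using this)

end Split

/-- For a split graph `G` with split partition `(C, I)`: if `deg_G(x) ≥ |C| + 1`
for every `x ∈ C` and `deg_G(y) ≤ |C| - 2` for every `y ∈ I`, then
`gp(G\bar{G}) = n(G)`. -/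
theorem gp_compPrism_split_eq_card {V : Type*} [Fintype V] (G : SimpleGraph V)
    (C I : Set V) (hunion : C ∪ I = Set.univ) (hdisj : Disjoint C I)
    (hC : G.IsClique C) (hI : ∀ u ∈ I, ∀ w ∈ I, ¬ G.Adj u w)
    (hdegC : ∀ x ∈ C, C.ncard + 1 ≤ (G.neighborSet x).ncard)
    (hdegI : ∀ y ∈ I, ((G.neighborSet y).ncard : ℤ) ≤ (C.ncard : ℤ) - 2) :
    gpNum (compPrism G) = Fintype.card V := by
  have hmemI : ∀ w ∉ C, w ∈ I := fun w hw ↦ (hunion ▸ Set.mem_univ w : w ∈ C ∪ I).resolve_left hw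
  have hIclique : Gᶜ.IsClique I := fun u hu w hw hne ↦ (G.compl_adj u w).mpr ⟨hne, hI u hu w hw⟩
  refine IsGreatest.csSup_eq ⟨⟨_, isGenPosSet_compPrism_image_inl_union_image_inr hdisj hC hIclique,
    ?_⟩, ?_⟩
  · rw [Set.ncard_union_eq Set.disjoint_image_inl_image_inr,
      Set.ncard_image_of_injective _ inl_injective, Set.ncard_image_of_injective _ inr_injective,
      ← Set.ncard_union_eq hdisj, hunion, Set.ncard_univ, Nat.card_eq_fintype_card]
  rintro _ ⟨S, hS, rfl⟩
  rw [← Nat.card_eq_fintype_card]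
  refine ncard_le_of_isGenPosSet_compPrism hC (fun u hu w hw ↦ hI u (hmemI u hu) w (hmemI w hw))
    hdegC (fun y hy ↦ ?_) hS
  have := hdegI y (hmemI y hy)
  omega
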